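/- Let R be a semiring and f : M → N a morphism of R-modules. Then f is a coequalizer of some morphism g : L → M and the zero map if and only if N is isomorphic to the quotient of M by a saturated submodule with f the natural projection; moreover the coequalizer of g and 0 is the projection M → M/g(L). -/

import Mathlib

/-- A submodule `N` of a module `M` over a semiring is *saturated* if
`x + y ∈ N` and `y ∈ N` imply `x ∈ N`. -/
def SaturatedSub {R M : Type*} [Semiring R] [AddCommMonoid M] [Module R M]
    (N : Submodule R M) : Prop :=
  ∀ x y : M, x + y ∈ N → y ∈ N → x ∈ N

variable {R M : Type*} [Semiring R] [AddCommMonoid M] [Module R M]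

/-- The congruence on `M` defined by a submodule `N`:
`x ~ y` iff `x + n = y + n'` for some `n, n' ∈ N`. -/
def quotCon (N : Submodule R M) : AddCon M where
  r x y := ∃ n ∈ N, ∃ n' ∈ N, x + n = y + n'
  iseqv := by
    constructor
    · intro x; exact ⟨0, N.zero_mem, 0, N.zero_mem, rfl⟩
    · rintro x y ⟨n, hn, n', hn', h⟩; exact ⟨n', hn', n, hn, h.symm⟩
    · rintro x y z ⟨n, hn, n', hn', h1⟩ ⟨m, hm, m', hm', h2⟩
      refine ⟨n + m, N.add_mem hn hm, m' + n', N.add_mem hm' hn', ?_⟩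
      calc x + (n + m) = x + n + m := (add_assoc _ _ _).symm
        _ = y + n' + m := by rw [h1]
        _ = y + m + n' := by rw [add_right_comm]
        _ = z + m' + n' := by rw [h2]
        _ = z + (m' + n') := add_assoc _ _ _
  add' := by
    rintro w x y z ⟨n, hn, n', hn', h1⟩ ⟨m, hm, m', hm', h2⟩
    refine ⟨n + m, N.add_mem hn hm, n' + m', N.add_mem hn' hm', ?_⟩
    calc w + y + (n + m) = (w + n) + (y + m) := by rw [add_add_add_comm]
      _ = (x + n') + (z + m') := by rw [h1, h2]
      _ = x + z + (n' + m') := by rw [add_add_add_comm]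

instance (N : Submodule R M) : SMul R (quotCon N).Quotient where
  smul r := Quotient.map' (fun m => r • m) (by
    rintro a b ⟨n, hn, n', hn', h⟩
    exact ⟨r • n, N.smul_mem r hn, r • n', N.smul_mem r hn', by
      rw [← smul_add, h, smul_add]⟩)

instance (N : Submodule R M) : Module R (quotCon N).Quotient where
  one_smul x := Quotient.inductionOn' x fun m => congrArg Quotient.mk'' (one_smul R m)
  mul_smul r s x := Quotient.inductionOn' x fun m => congrArg Quotient.mk'' (mul_smul r s m)
  smul_zero r := congrArg Quotient.mk'' (smul_zero (a := r) : r • (0 : M) = 0)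
  smul_add r x y := Quotient.inductionOn₂' x y fun m n => congrArg Quotient.mk'' (smul_add r m n)
  add_smul r s x := Quotient.inductionOn' x fun m => congrArg Quotient.mk'' (add_smul r s m)
  zero_smul x := Quotient.inductionOn' x fun m => congrArg Quotient.mk'' (zero_smul R m)

/-- The canonical projection `M → M/N` as a linear map. -/
def mkLinear (N : Submodule R M) : M →ₗ[R] (quotCon N).Quotient where
  toFun := Quotient.mk''
  map_add' _ _ := rfl
  map_smul' _ _ := by exact rfl

theorem zero_def' (T : Submodule R M) :
    (0 : (quotCon T).Quotient) = Quotient.mk'' 0 := rfl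

theorem mk_eq_zero_of_mem (T : Submodule R M) {t : M} (ht : t ∈ T) :
    mkLinear T t = 0 := by
  rw [zero_def']
  exact Quotient.sound' ⟨0, T.zero_mem, t, ht, by simp⟩

/-- Lift a linear map vanishing on `T` to the quotient. -/
def liftQ (T : Submodule R M) {P : Type*} [AddCommMonoid P] [Module R P]
    (h : M →ₗ[R] P) (hT : ∀ t ∈ T, h t = 0) : (quotCon T).Quotient →ₗ[R] P where
  toFun := Quotient.lift h (by
    rintro a b ⟨n, hn, n', hn', hab⟩
    have : h a + h n = h b + h n' := by rw [← map_add, ← map_add, hab]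
    simpa [hT n hn, hT n' hn'] using this)
  map_add' x y := Quotient.inductionOn₂' x y fun a b => map_add h a b
  map_smul' r x := Quotient.inductionOn' x fun a => map_smul h r a

theorem liftQ_mk (T : Submodule R M) {P : Type*} [AddCommMonoid P] [Module R P]
    (h : M →ₗ[R] P) (hT : ∀ t ∈ T, h t = 0) (m : M) :
    liftQ T h hT (Quotient.mk'' m) = h m := rfl

theorem univQ (T : Submodule R M) {P : Type*} [AddCommMonoid P] [Module R P]
    (h : M →ₗ[R] P) (hT : ∀ t ∈ T, h t = 0) :
    ∃! u : (quotCon T).Quotient →ₗ[R] P, u.comp (mkLinear T) = h := by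
  refine ⟨liftQ T h hT, LinearMap.ext fun m => rfl, ?_⟩
  intro u hu
  apply LinearMap.ext; intro x
  refine Quotient.inductionOn' x fun m => ?_
  exact LinearMap.congr_fun hu m

universe u

/-- A bundled module over a semiring `R`. -/
structure BundledMod (R : Type u) [Semiring R] : Type (u + 1) where
  carrier : Type u
  [addCommMonoid : AddCommMonoid carrier]
  [module : Module R carrier]

attribute [instance] BundledMod.addCommMonoid BundledMod.module

/-- `f` is a coequalizer of some morphism `g` and the zero map, expressed by the
universal property in the category of `R`-modules. -/
def IsNormalEpi {R : Type u} [Semiring R] {M N : Type u}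
    [AddCommMonoid M] [Module R M] [AddCommMonoid N] [Module R N]
    (f : M →ₗ[R] N) : Prop :=
  ∃ (L : BundledMod R) (g : L.carrier →ₗ[R] M),
    (∀ l, f (g l) = 0) ∧
    ∀ (P : BundledMod R) (h : M →ₗ[R] P.carrier),
      (∀ l, h (g l) = 0) → ∃! u : N →ₗ[R] P.carrier, u.comp f = h

/-- A morphism `f : M → N` of modules over a semiring `R` is a coequalizer of some
morphism and the zero map iff `N` is isomorphic to the quotient of `M` by a saturated
submodule with `f` the natural projection; moreover the coequalizer of any
`g : L → M` and `0` is the projection `M → M/g(L)`. -/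
theorem stmt6 {R : Type u} [Semiring R] {M N : Type u}
    [AddCommMonoid M] [Module R M] [AddCommMonoid N] [Module R N]
    (f : M →ₗ[R] N) :
    (IsNormalEpi f ↔
      ∃ T : Submodule R M, SaturatedSub T ∧
        ∃ e : (quotCon T).Quotient ≃ₗ[R] N, ∀ m : M, f m = e (Quotient.mk'' m)) ∧
    (∀ (L : BundledMod R) (g : L.carrier →ₗ[R] M),
      (∀ l, mkLinear (LinearMap.range g) (g l) = 0) ∧
      ∀ (P : BundledMod R) (h : M →ₗ[R] P.carrier),
        (∀ l, h (g l) = 0) →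
        ∃! u : (quotCon (LinearMap.range g)).Quotient →ₗ[R] P.carrier,
          u.comp (mkLinear (LinearMap.range g)) = h) := by
  constructor
  · constructor
    · rintro ⟨L, g, hg0, huniv⟩
      set S : Submodule R M := LinearMap.range g with hS
      set T : Submodule R M := LinearMap.ker (mkLinear S) with hTdef
      have hmemT : ∀ x : M, x ∈ T ↔ mkLinear S x = 0 := by
        intro x; rfl
      have hsat : SaturatedSub T := by
        intro x y hxy hy
        rw [hmemT] at hxy hy ⊢
        have : mkLinear S x + mkLinear S y = mkLinear S (x + y) := (map_add _ _ _).symm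
        rw [hy, add_zero] at this
        rw [this, hxy]
      -- f vanishes on T
      have hfT : ∀ t ∈ T, f t = 0 := by
        intro t ht
        rw [hmemT] at ht
        obtain ⟨n, hn, n', hn', h⟩ := Quotient.exact' (a := t) (b := (0 : M)) ht
        obtain ⟨l, rfl⟩ := hn
        obtain ⟨l', rfl⟩ := hn'
        have := congrArg f h
        rw [map_add, map_add, hg0 l, hg0 l', add_zero, add_zero, map_zero] at this
        exact this
      set v : (quotCon T).Quotient →ₗ[R] N := liftQ T f hfT with hv
      -- mk_T kills g
      have hmkT : ∀ l, mkLinear T (g l) = 0 := by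
        intro l
        apply mk_eq_zero_of_mem
        rw [hmemT]
        exact mk_eq_zero_of_mem S ⟨l, rfl⟩
      obtain ⟨u, hu, huu⟩ := huniv ⟨(quotCon T).Quotient⟩ (mkLinear T) hmkT
      have hvu : v.comp u = LinearMap.id := by
        obtain ⟨w, hw, hww⟩ := huniv ⟨N⟩ f hg0
        have h1 : (v.comp u).comp f = f := by
          rw [LinearMap.comp_assoc, hu]
          apply LinearMap.ext; intro m; rfl
        rw [hww _ h1, hww LinearMap.id (by apply LinearMap.ext; intro m; rfl)]
      have huv : u.comp v = LinearMap.id := by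
        apply LinearMap.ext; intro x
        refine Quotient.inductionOn' x fun m => ?_
        have : v (Quotient.mk'' m) = f m := rfl
        show u (v (Quotient.mk'' m)) = Quotient.mk'' m
        rw [this, ← LinearMap.comp_apply, hu]; rfl
      refine ⟨T, hsat, LinearEquiv.ofLinear v u hvu huv, fun m => ?_⟩
      rfl
    · rintro ⟨T, hsat, e, he⟩
      refine ⟨⟨T⟩, T.subtype, fun t => ?_, ?_⟩
      · rw [he]
        show e (mkLinear T (T.subtype t)) = 0
        exact (congrArg e
          (mk_eq_zero_of_mem T t.2 : mkLinear T (T.subtype t) = 0)).trans (map_zero e)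
      · intro P h hh
        have hT : ∀ t ∈ T, h t = 0 := fun t ht => hh ⟨t, ht⟩
        refine ⟨(liftQ T h hT).comp e.symm.toLinearMap, ?_, ?_⟩
        · apply LinearMap.ext; intro m
          show liftQ T h hT (e.symm (f m)) = h m
          rw [he]; exact congrArg (liftQ T h hT) (e.symm_apply_apply (Quotient.mk'' m : (quotCon T).Quotient))
        · intro u' hu'
          apply LinearMap.ext; intro n
          obtain ⟨m, hm⟩ : ∃ m, Quotient.mk'' m = e.symm n :=
            Quotient.inductionOn' (e.symm n) fun m => ⟨m, rfl⟩
          have hfm : f m = n := by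
            rw [he, hm, e.apply_symm_apply]
          rw [← hfm, ← LinearMap.comp_apply, hu']
          show h m = liftQ T h hT (e.symm (f m))
          rw [he]; exact (congrArg (liftQ T h hT) (e.symm_apply_apply (Quotient.mk'' m : (quotCon T).Quotient))).symm
  · intro L g
    refine ⟨fun l => mk_eq_zero_of_mem _ ⟨l, rfl⟩, fun P h hh => ?_⟩
    refine univQ _ h ?_
    rintro t ⟨l, rfl⟩
    exact hh l
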